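/- arXiv:2510.18167 — 3 statements merged into one kernel-verified Lean document; each statement's English description precedes it below -/
import Mathlib

section
/- Let g_x = 2^{-N/2}(g_∅ + ∑_{A ⊆ [N], A≠∅} (1 + (α/(1-α))(1-ρ_A))^{-1/2} ∏_{j∈A}(-1)^{x[j]} g_A) where (g_A)_{A⊆[N]} are i.i.d. standard normal. Then (g_x)_{x ∈ {0,1}^N} is a centered Gaussian field with Cov(g_x, g_y) = 2^{-N}(1 + ∑_{A≠∅} (1 + (α/(1-α))(1-ρ_A))^{-1} ∏_{k∈A}(-1)^{x[k]+y[k]}) = (1-α)G(x,y;α). -/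
/-!
Write `g_x = ∑_A w_x(A) g_A` with `w_x(A) = 2^{-N/2} t_A^{-1/2} ∏_{j∈A} (-1)^{x_j}` and
`t_A = 1 + (α/(1-α))(1-ρ_A)`; the `A = ∅` summand is the separate `g_∅` term because `ρ_∅ = 1`.
The `g_A` are centered and, being pairwise independent with unit variance, orthonormal in `L²`.
Hence `g_x` is centered and `E[g_x g_y] = ∑_A w_x(A) w_y(A)`, which is the stated covariance
since `t_A ≥ 0` and the signs multiply to `∏_{k∈A} (-1)^{x_k + y_k}`.
-/

open Finset MeasureTheory ProbabilityTheory
open scoped NNReal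

namespace ProbabilityTheory.HasLaw

variable {Ω : Type*} [MeasurableSpace Ω] {μ : Measure Ω} {X : Ω → ℝ}

lemma memLp_two_of_gaussianReal {m : ℝ} {v : ℝ≥0}
    (hX : HasLaw X (gaussianReal m v) μ) : MemLp X 2 μ :=
  hX.hasGaussianLaw.memLp_two

lemma integral_eq_of_gaussianReal {m : ℝ} {v : ℝ≥0}
    (hX : HasLaw X (gaussianReal m v) μ) : ∫ ω, X ω ∂μ = m := by
  rw [hX.integral_eq, integral_id_gaussianReal]

lemma integral_sq_of_gaussianReal [IsProbabilityMeasure μ] {v : ℝ≥0}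
    (hX : HasLaw X (gaussianReal 0 v) μ) : ∫ ω, X ω ^ 2 ∂μ = v := by
  rw [← variance_of_integral_eq_zero hX.aemeasurable hX.integral_eq_of_gaussianReal,
    hX.variance_eq, variance_id_gaussianReal]

end ProbabilityTheory.HasLaw

section Orthonormal

variable {ι Ω : Type*} [MeasurableSpace Ω] {μ : Measure Ω} {g : ι → Ω → ℝ}

lemma integral_mul_eq_ite_of_pairwise_indepFun [DecidableEq ι]
    (hint : ∀ i, Integrable (g i) μ) (hmean : ∀ i, ∫ ω, g i ω ∂μ = 0)
    (hsq : ∀ i, ∫ ω, g i ω ^ 2 ∂μ = 1) (hindep : Pairwise fun i j ↦ IndepFun (g i) (g j) μ)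
    (i j : ι) : ∫ ω, g i ω * g j ω ∂μ = if i = j then 1 else 0 := by
  rcases eq_or_ne i j with rfl | hij
  · simpa only [sq, if_true] using hsq i
  · rw [if_neg hij]
    have := (hindep hij).integral_mul_eq_mul_integral (hint i).aestronglyMeasurable
      (hint j).aestronglyMeasurable
    simpa only [Pi.mul_apply, hmean, mul_zero] using this

variable [Fintype ι]

lemma integral_sum_mul_eq_zero (hint : ∀ i, Integrable (g i) μ)
    (hmean : ∀ i, ∫ ω, g i ω ∂μ = 0) (a : ι → ℝ) : ∫ ω, ∑ i, a i * g i ω ∂μ = 0 := by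
  rw [integral_finsetSum _ fun i _ ↦ (hint i).const_mul (a i)]
  simp only [integral_const_mul, hmean, mul_zero, sum_const_zero]

lemma integral_sum_mul_sum_of_orthonormal [DecidableEq ι] (hg : ∀ i, MemLp (g i) 2 μ)
    (horth : ∀ i j, ∫ ω, g i ω * g j ω ∂μ = if i = j then 1 else 0) (a b : ι → ℝ) :
    ∫ ω, (∑ i, a i * g i ω) * (∑ j, b j * g j ω) ∂μ = ∑ i, a i * b i := by
  have hint : ∀ i j, Integrable (fun ω ↦ a i * b j * (g i ω * g j ω)) μ := fun i j ↦
    ((hg i).integrable_mul (hg j)).const_mul _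
  have hexpand : ∀ ω, (∑ i, a i * g i ω) * (∑ j, b j * g j ω)
      = ∑ i, ∑ j, a i * b j * (g i ω * g j ω) := fun ω ↦ by
    simp only [sum_mul_sum, mul_mul_mul_comm]
  simp_rw [hexpand]
  rw [integral_finsetSum _ fun i _ ↦ integrable_finsetSum _ fun j _ ↦ hint i j]
  simp_rw [integral_finsetSum _ fun j _ ↦ hint _ j, integral_const_mul, horth, mul_ite,
    mul_one, mul_zero, sum_ite_eq, mem_univ, if_true]

end Orthonormal

lemma Finset.add_sum_filter_ne_empty {α M : Type*} [Fintype α] [DecidableEq α] [AddCommMonoid M]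
    (f : Finset α → M) : f ∅ + ∑ A ∈ univ.filter (· ≠ ∅), f A = ∑ A, f A := by
  rw [filter_ne', add_sum_erase _ _ (mem_univ _)]

lemma inv_sqrt_mul_prod_neg_one_pow_mul_self {ι : Type*} {t : ℝ} (ht : 0 ≤ t) (A : Finset ι)
    (m n : ι → ℕ) :
    ((Real.sqrt t)⁻¹ * ∏ j ∈ A, (-1 : ℝ) ^ m j) * ((Real.sqrt t)⁻¹ * ∏ j ∈ A, (-1 : ℝ) ^ n j)
      = t⁻¹ * ∏ k ∈ A, (-1 : ℝ) ^ (m k + n k) := by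
  rw [mul_mul_mul_comm, ← mul_inv, Real.mul_self_sqrt ht, ← prod_mul_distrib]
  simp only [pow_add]

theorem gaussian_field_strong_representation_general
    (N : ℕ) (α : ℝ) (hα : α ∈ Set.Ioo (0 : ℝ) 1)
    (ρ : Finset (Fin N) → ℝ)
    (hρ : ∀ A, ρ A ∈ Set.Icc (-1 : ℝ) 1) (hρ0 : ρ ∅ = 1)
    {Ω : Type*} [MeasurableSpace Ω] (μ : Measure Ω) [IsProbabilityMeasure μ]
    (g : Finset (Fin N) → Ω → ℝ)
    (hgmeas : ∀ A, Measurable (g A))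
    (hglaw : ∀ A, Measure.map (g A) μ = gaussianReal 0 1)
    (hgindep : iIndepFun g μ)
    (gx : (Fin N → ZMod 2) → Ω → ℝ)
    (hgx : ∀ x ω, gx x ω = (Real.sqrt ((2 : ℝ) ^ N))⁻¹ *
      (g ∅ ω + ∑ A ∈ (Finset.univ : Finset (Finset (Fin N))).filter (· ≠ ∅),
        (Real.sqrt (1 + (α / (1 - α)) * (1 - ρ A)))⁻¹ *
          (∏ j ∈ A, (-1 : ℝ) ^ ((x j).val)) * g A ω)) :
    (∀ x, ∫ ω, gx x ω ∂μ = 0) ∧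
      (∀ x y, ∫ ω, gx x ω * gx y ω ∂μ
        = (2 : ℝ) ^ (-(N : ℤ)) *
          (1 + ∑ A ∈ (Finset.univ : Finset (Finset (Fin N))).filter (· ≠ ∅),
            (1 + (α / (1 - α)) * (1 - ρ A))⁻¹ *
              ∏ k ∈ A, (-1 : ℝ) ^ ((x k).val + (y k).val))) := by
  obtain ⟨hα0, hα1⟩ := hα
  set s : ℝ := (Real.sqrt ((2 : ℝ) ^ N))⁻¹
  set t : Finset (Fin N) → ℝ := fun A ↦ 1 + (α / (1 - α)) * (1 - ρ A)
  have ht_nonneg : ∀ A, 0 ≤ t A := fun A ↦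
    have : 0 ≤ α / (1 - α) * (1 - ρ A) :=
      mul_nonneg (div_nonneg hα0.le (by linarith)) (by linarith [(hρ A).2])
    by linarith
  have ht_empty : t ∅ = 1 := by simp only [t, hρ0, sub_self, mul_zero, add_zero]
  set w : (Fin N → ZMod 2) → Finset (Fin N) → ℝ :=
    fun x A ↦ s * ((Real.sqrt (t A))⁻¹ * ∏ j ∈ A, (-1 : ℝ) ^ (x j).val)
  have hgx_sum : ∀ x, gx x = fun ω ↦ ∑ A, w x A * g A ω := fun x ↦ funext fun ω ↦ by
    rw [hgx, ← add_sum_filter_ne_empty, mul_add, mul_sum]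
    simp only [w, ht_empty, Real.sqrt_one, inv_one, prod_empty, mul_one, mul_assoc]
    rfl
  have hlaw : ∀ A, HasLaw (g A) (gaussianReal 0 1) μ := fun A ↦ ⟨(hgmeas A).aemeasurable, hglaw A⟩
  have hL2 : ∀ A, MemLp (g A) 2 μ := fun A ↦ (hlaw A).memLp_two_of_gaussianReal
  have hint : ∀ A, Integrable (g A) μ := fun A ↦ (hL2 A).integrable one_le_two
  have hmean : ∀ A, ∫ ω, g A ω ∂μ = 0 := fun A ↦ (hlaw A).integral_eq_of_gaussianReal
  have hsq : ∀ A, ∫ ω, g A ω ^ 2 ∂μ = 1 := fun A ↦ by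
    simpa only [NNReal.coe_one] using (hlaw A).integral_sq_of_gaussianReal
  have horth := integral_mul_eq_ite_of_pairwise_indepFun hint hmean hsq
    fun A B h ↦ hgindep.indepFun h
  refine ⟨fun x ↦ by rw [hgx_sum]; exact integral_sum_mul_eq_zero hint hmean _, fun x y ↦ ?_⟩
  rw [hgx_sum, hgx_sum, integral_sum_mul_sum_of_orthonormal hL2 horth]
  calc ∑ A, w x A * w y A
      = s ^ 2 * ∑ A, (t A)⁻¹ * ∏ k ∈ A, (-1 : ℝ) ^ ((x k).val + (y k).val) := by
        simp only [w, mul_sum, mul_mul_mul_comm s, ← sq,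
          inv_sqrt_mul_prod_neg_one_pow_mul_self (ht_nonneg _)]
    _ = _ := by
        rw [← add_sum_filter_ne_empty, ht_empty, inv_one, prod_empty, mul_one, inv_pow,
          Real.sq_sqrt (by positivity), zpow_neg, zpow_natCast]

/-- the field
`g_x = 2^{-N/2}(g_∅ + ∑_{A≠∅} (1+(α/(1-α))(1-ρ_A))^{-1/2} ∏_{j∈A}(-1)^{x[j]} g_A)`,
with `(g_A)` i.i.d. standard normals, is centered with covariance
`Cov(g_x,g_y) = 2^{-N}(1 + ∑_{A≠∅}(1+(α/(1-α))(1-ρ_A))⁻¹ ∏_{k∈A}(-1)^{x[k]+y[k]})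
= (1-α)G(x,y;α)`. -/
theorem gaussian_field_strong_representation
    (N : ℕ) (hN : 0 < N) (α : ℝ) (hα : α ∈ Set.Ioo (0 : ℝ) 1)
    (ρ : Finset (Fin N) → ℝ)
    (hρ : ∀ A, ρ A ∈ Set.Icc (-1 : ℝ) 1) (hρ0 : ρ ∅ = 1)
    {Ω : Type*} [MeasurableSpace Ω] (μ : Measure Ω) [IsProbabilityMeasure μ]
    (g : Finset (Fin N) → Ω → ℝ)
    (hgmeas : ∀ A, Measurable (g A))
    (hglaw : ∀ A, Measure.map (g A) μ = gaussianReal 0 1)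
    (hgindep : iIndepFun g μ)
    (gx : (Fin N → ZMod 2) → Ω → ℝ)
    (hgx : ∀ x ω, gx x ω = (Real.sqrt ((2 : ℝ) ^ N))⁻¹ *
      (g ∅ ω + ∑ A ∈ (Finset.univ : Finset (Finset (Fin N))).filter (· ≠ ∅),
        (Real.sqrt (1 + (α / (1 - α)) * (1 - ρ A)))⁻¹ *
          (∏ j ∈ A, (-1 : ℝ) ^ ((x j).val)) * g A ω)) :
    (∀ x, ∫ ω, gx x ω ∂μ = 0) ∧
      (∀ x y, ∫ ω, gx x ω * gx y ω ∂μ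
        = (2 : ℝ) ^ (-(N : ℤ)) *
          (1 + ∑ A ∈ (Finset.univ : Finset (Finset (Fin N))).filter (· ≠ ∅),
            (1 + (α / (1 - α)) * (1 - ρ A))⁻¹ *
              ∏ k ∈ A, (-1 : ℝ) ^ ((x k).val + (y k).val))) :=
  gaussian_field_strong_representation_general N α hα ρ hρ hρ0 μ g hgmeas hglaw hgindep gx hgx
end

section
/- With Y = ∏_{j=1}^{T_α} ξ_j as above and V = (1−Y)/2, for any x, y ∈ {0,1}^N (entries of the de Finetti random walk) the killed Green function satisfies (1-α)G(x,y;α) = E[((1−Y)/2)^{‖y−x‖} ((1+Y)/2)^{N−‖y−x‖}]; equivalently, X_{T_α} − x mod 2 is an exchangeable 0-1 sequence (de Finetti) with mixing measure equal to the law of V. -/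
/-!
Conditioning on `T` and using independence, `E[Y^k] = ∑ₜ (1-α) αᵗ ρₖᵗ = (1-α)/(1-αρₖ)`, which is
exactly the `k`-th coefficient `(1 + α/(1-α) (1-ρₖ))⁻¹` of the Green function. The Krawtchouk
generating function at `φ = Y` expands `((1-Y)/2)^w ((1+Y)/2)^(N-w)` as
`2^(-N) ∑ₖ C(N,k) Qₖ(w) Y^k`, and taking expectations term by term gives the formula.
-/

open Finset MeasureTheory ProbabilityTheory

section

variable {Ω : Type*} [MeasurableSpace Ω] {μ : Measure Ω}

theorem integral_comp_of_indepFun_nat {E : Type*} [MeasurableSpace E] {T : Ω → ℕ} {X : Ω → E}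
    (hT : Measurable T) (hX : Measurable X) (hTX : IndepFun T X μ) {g : ℕ → E → ℝ}
    (hg : ∀ t, Measurable (g t)) (hint : Integrable (fun ω => g (T ω) (X ω)) μ) :
    ∫ ω, g (T ω) (X ω) ∂μ = ∑' t, μ.real {ω | T ω = t} * ∫ ω, g t (X ω) ∂μ := by
  have hlevel : ∀ t, MeasurableSet {ω | T ω = t} := fun t => hT (measurableSet_singleton t)
  have hcover : (⋃ t, {ω | T ω = t}) = Set.univ := Set.iUnion_eq_univ_iff.mpr fun ω => ⟨T ω, rfl⟩
  have hdisj : Pairwise (Function.onFun Disjoint fun t => {ω | T ω = t}) :=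
    fun a b hab => Set.disjoint_left.mpr fun ω ha hb => hab (ha.symm.trans hb)
  rw [← setIntegral_univ, ← hcover, integral_iUnion hlevel hdisj (hcover ▸ hint.integrableOn)]
  refine tsum_congr fun t => ?_
  have hindicator : ∀ ω, {ω | T ω = t}.indicator (fun ω => g (T ω) (X ω)) ω
      = {n | n = t}.indicator 1 (T ω) * g t (X ω) := by
    intro ω
    by_cases h : T ω = t <;> simp [Set.indicator, h]
  have hind : IndepFun ({n | n = t}.indicator (1 : ℕ → ℝ) ∘ T) (g t ∘ X) μ :=
    hTX.comp measurable_from_top (hg t)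
  rw [← integral_indicator (hlevel t), integral_congr_ae (.of_forall hindicator)]
  refine (hind.integral_fun_mul_eq_mul_integral (measurable_from_top.comp hT).aestronglyMeasurable
      ((hg t).comp hX).aestronglyMeasurable).trans ?_
  rw [← integral_indicator_one (hlevel t)]
  -- `{n | n = t}.indicator 1 ∘ T` and `{ω | T ω = t}.indicator 1` agree definitionally
  rfl

theorem iIndepFun.integral_prod_range {f : ℕ → Ω → ℝ} (hf : ∀ j, Measurable (f j))
    (hind : iIndepFun f μ) (t : ℕ) :
    ∫ ω, ∏ j ∈ range t, f j ω ∂μ = ∏ j ∈ range t, ∫ ω, f j ω ∂μ := by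
  have := (hind.precomp (Subtype.val_injective : Function.Injective ((↑) : range t → ℕ)))
    |>.integral_fun_prod_eq_prod_integral fun j => (hf j).aestronglyMeasurable
  rw [← Finset.prod_coe_sort]
  simp_rw [← Finset.prod_coe_sort (range t) (fun j => f j _)]
  exact this

theorem measurable_prod_range_comp {T : Ω → ℕ} {η : ℕ → Ω → ℝ} (hT : Measurable T)
    (hη : ∀ j, Measurable (η j)) : Measurable fun ω => ∏ j ∈ range (T ω), η j ω :=
  (measurable_from_prod_countable_right (f := fun p : ℕ × (ℕ → ℝ) => ∏ j ∈ range p.1, p.2 j)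
    fun t => Finset.measurable_prod (range t) fun j _ => measurable_pi_apply j).comp
    (hT.prodMk (measurable_pi_lambda _ hη))

theorem ae_abs_prod_le_one {η : ℕ → Ω → ℝ} (hη : ∀ j, ∀ᵐ ω ∂μ, |η j ω| ≤ 1) :
    ∀ᵐ ω ∂μ, ∀ s : Finset ℕ, |∏ j ∈ s, η j ω| ≤ 1 := by
  filter_upwards [ae_all_iff.mpr hη] with ω hω s
  rw [abs_prod]
  exact prod_le_one (fun j _ => abs_nonneg _) fun j _ => hω j

theorem integrable_pow_of_ae_abs_le_one [IsFiniteMeasure μ] {f : Ω → ℝ} (hf : Measurable f)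
    (hbd : ∀ᵐ ω ∂μ, |f ω| ≤ 1) (k : ℕ) : Integrable (fun ω => f ω ^ k) μ :=
  Integrable.of_bound (hf.pow_const k).aestronglyMeasurable 1 <| by
    filter_upwards [hbd] with ω h
    rw [Real.norm_eq_abs, abs_pow]
    exact pow_le_one₀ (abs_nonneg _) h

theorem integral_prod_range_geometric [IsProbabilityMeasure μ] {α r : ℝ} (hα : α ∈ Set.Ioo 0 1)
    {η : ℕ → Ω → ℝ} (hη : ∀ j, Measurable (η j)) (hind : iIndepFun η μ)
    (hbd : ∀ j, ∀ᵐ ω ∂μ, |η j ω| ≤ 1) (hmean : ∀ j, ∫ ω, η j ω ∂μ = r)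
    {T : Ω → ℕ} (hT : Measurable T)
    (hTgeom : ∀ t : ℕ, μ {ω | T ω = t} = ENNReal.ofReal ((1 - α) * α ^ t))
    (hTη : IndepFun T (fun ω j => η j ω) μ) :
    ∫ ω, ∏ j ∈ range (T ω), η j ω ∂μ = (1 - α) * (1 - α * r)⁻¹ := by
  obtain ⟨hα0, hα1⟩ := hα
  have hr : |r| ≤ 1 := by
    simpa [← hmean 0] using norm_integral_le_of_norm_le_const (f := η 0) (μ := μ) (C := 1) (hbd 0)
  have hαr : ‖α * r‖ < 1 := by
    rw [Real.norm_eq_abs, abs_mul, abs_of_pos hα0]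
    nlinarith [abs_nonneg r]
  have hint : Integrable (fun ω => ∏ j ∈ range (T ω), η j ω) μ := by
    simpa using integrable_pow_of_ae_abs_le_one (measurable_prod_range_comp hT hη)
      (by filter_upwards [ae_abs_prod_le_one hbd] with ω h using h _) 1
  rw [integral_comp_of_indepFun_nat (g := fun t v => ∏ j ∈ range t, v j) hT
    (measurable_pi_lambda _ hη) hTη
    (fun t => Finset.measurable_prod _ fun j _ => measurable_pi_apply j) hint]
  simp_rw [iIndepFun.integral_prod_range hη hind, hmean, prod_const, card_range, measureReal_def,
    hTgeom, ENNReal.toReal_ofReal (by positivity : 0 ≤ (1 - α) * α ^ _), mul_assoc, ← mul_pow]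
  rw [tsum_mul_left, tsum_geometric_of_norm_lt_one hαr]

theorem ae_abs_le_one_of_map_eq {ν : Measure ℝ} (hν : ν (Set.Icc (0 : ℝ) 1)ᶜ = 0) {X : Ω → ℝ}
    (hX : Measurable X) (hlaw : μ.map X = ν.map fun w => 1 - 2 * w) :
    ∀ᵐ ω ∂μ, |X ω| ≤ 1 := by
  have hset : MeasurableSet {v : ℝ | |v| ≤ 1} := measurableSet_le (by fun_prop) measurable_const
  rw [← ae_map_iff hX.aemeasurable hset, hlaw, ae_map_iff (by fun_prop) hset]
  filter_upwards [ae_iff.mpr hν] with u hu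
  exact abs_le.mpr ⟨by linarith [hu.2], by linarith [hu.1]⟩

theorem integral_comp_eq_of_map_eq {ν : Measure ℝ} {X : Ω → ℝ} {f g : ℝ → ℝ}
    (hX : Measurable X) (hf : Measurable f) (hg : Measurable g) (hlaw : μ.map X = ν.map f) :
    ∫ ω, g (X ω) ∂μ = ∫ w, g (f w) ∂ν := by
  rw [← integral_map hX.aemeasurable hg.aestronglyMeasurable, hlaw,
    integral_map hf.aemeasurable hg.aestronglyMeasurable]


theorem integral_prod_range_pow_geometric [IsProbabilityMeasure μ] {α : ℝ}
    (hα : α ∈ Set.Ioo 0 1) {ν : Measure ℝ} (hν : ν (Set.Icc (0 : ℝ) 1)ᶜ = 0) {ξ : ℕ → Ω → ℝ}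
    (hξ : ∀ j, Measurable (ξ j)) (hlaw : ∀ j, μ.map (ξ j) = ν.map fun w => 1 - 2 * w)
    (hind : iIndepFun ξ μ) {T : Ω → ℕ} (hT : Measurable T)
    (hTgeom : ∀ t : ℕ, μ {ω | T ω = t} = ENNReal.ofReal ((1 - α) * α ^ t))
    (hTξ : IndepFun T (fun ω j => ξ j ω) μ) (k : ℕ) :
    ∫ ω, (∏ j ∈ range (T ω), ξ j ω) ^ k ∂μ
      = (1 - α) * (1 - α * ∫ w, (1 - 2 * w) ^ k ∂ν)⁻¹ := by
  have hpow_bd j : ∀ᵐ ω ∂μ, |ξ j ω ^ k| ≤ 1 := by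
    filter_upwards [ae_abs_le_one_of_map_eq hν (hξ j) (hlaw j)] with ω h
    exact abs_pow (ξ j ω) k ▸ pow_le_one₀ (abs_nonneg _) h
  have hpow_mean j : ∫ ω, ξ j ω ^ k ∂μ = ∫ w, (1 - 2 * w) ^ k ∂ν :=
    integral_comp_eq_of_map_eq (hξ j) (by fun_prop) (measurable_id.pow_const k) (hlaw j)
  simp_rw [← prod_pow]
  exact integral_prod_range_geometric hα (fun j => (hξ j).pow_const k)
    (hind.comp _ fun _ => measurable_id.pow_const k) hpow_bd hpow_mean hT hTgeom
    (hTξ.comp measurable_id (measurable_pi_lambda _ fun j => (measurable_pi_apply j).pow_const k))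

end

theorem two_zpow_neg_mul_krawtchouk_sum {N w : ℕ} (hw : w ≤ N) {q : ℕ → ℝ}
    (hq : ∀ φ : ℝ, ∑ k ∈ range (N + 1), (N.choose k : ℝ) * q k * φ ^ k
      = (1 - φ) ^ w * (1 + φ) ^ (N - w)) (y : ℝ) :
    (2 : ℝ) ^ (-(N : ℤ)) * ∑ k ∈ range (N + 1), (N.choose k : ℝ) * q k * y ^ k
      = ((1 - y) / 2) ^ w * ((1 + y) / 2) ^ (N - w) := by
  rw [hq, div_pow, div_pow, div_mul_div_comm, ← pow_add, Nat.add_sub_cancel' hw, zpow_neg,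
    zpow_natCast, inv_mul_eq_div]

theorem krawtchouk_zero_eq_one {N w : ℕ} {q : ℕ → ℝ}
    (hq : ∀ φ : ℝ, ∑ k ∈ range (N + 1), (N.choose k : ℝ) * q k * φ ^ k
      = (1 - φ) ^ w * (1 + φ) ^ (N - w)) : q 0 = 1 := by
  simpa [sum_range_succ'] using hq 0

theorem deFinetti_green_function_Y_general
    (N : ℕ) (α : ℝ) (hα : α ∈ Set.Ioo (0 : ℝ) 1)
    (ν : Measure ℝ) [IsProbabilityMeasure ν]
    (hν : ν (Set.Icc (0 : ℝ) 1)ᶜ = 0)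
    {Ω : Type*} [MeasurableSpace Ω] (μ : Measure Ω) [IsProbabilityMeasure μ]
    (ξ : ℕ → Ω → ℝ) (T : Ω → ℕ)
    (hξmeas : ∀ j, Measurable (ξ j))
    (hξlaw : ∀ j, Measure.map (ξ j) μ = Measure.map (fun w : ℝ => 1 - 2 * w) ν)
    (hξindep : iIndepFun ξ μ)
    (hTmeas : Measurable T)
    (hTgeom : ∀ t : ℕ, μ {ω | T ω = t} = ENNReal.ofReal ((1 - α) * α ^ t))
    (hTindep : IndepFun T (fun ω => fun j => ξ j ω) μ)
    (Y : Ω → ℝ)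
    (hY : ∀ ω, Y ω = ∏ j ∈ Finset.range (T ω), ξ j ω)
    (ρ : ℕ → ℝ) (hρ : ∀ k, ρ k = ∫ w, (1 - 2 * w) ^ k ∂ν)
    (Q : ℕ → ℕ → ℝ)
    (hQ : ∀ w : ℕ, w ≤ N → ∀ φ : ℝ,
      ∑ k ∈ Finset.range (N + 1), (N.choose k : ℝ) * Q k w * φ ^ k
        = (1 - φ) ^ w * (1 + φ) ^ (N - w)) :
    ∀ x y : Fin N → ZMod 2,
      (2 : ℝ) ^ (-(N : ℤ)) *
        (1 + ∑ k ∈ Finset.Icc 1 N,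
          (1 + (α / (1 - α)) * (1 - ρ k))⁻¹ * (N.choose k : ℝ) *
            Q k (∑ j, ((y - x) j).val))
      = ∫ ω, ((1 - Y ω) / 2) ^ (∑ j, ((y - x) j).val) *
          ((1 + Y ω) / 2) ^ (N - ∑ j, ((y - x) j).val) ∂μ := by
  intro x y
  set w := ∑ j, ((y - x) j).val
  have hw : w ≤ N := calc
    w ≤ ∑ _j : Fin N, 1 := sum_le_sum fun j _ => Nat.le_of_lt_succ (ZMod.val_lt _)
    _ = N := by simp
  have hξbd j : ∀ᵐ ω ∂μ, |ξ j ω| ≤ 1 := ae_abs_le_one_of_map_eq hν (hξmeas j) (hξlaw j)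
  have hYint : ∀ k, Integrable (fun ω => Y ω ^ k) μ := by
    rw [funext hY]
    exact integrable_pow_of_ae_abs_le_one (measurable_prod_range_comp hTmeas hξmeas)
      (by filter_upwards [ae_abs_prod_le_one hξbd] with ω h using h _)
  have hmoment k : ∫ ω, Y ω ^ k ∂μ = (1 + α / (1 - α) * (1 - ρ k))⁻¹ := by
    have : 1 - α ≠ 0 := by linarith [hα.2]
    simp_rw [hY]
    rw [integral_prod_range_pow_geometric hα hν hξmeas hξlaw hξindep hTmeas hTgeom hTindep, ← hρ]
    field_simp
    ring
  calc (2 : ℝ) ^ (-(N : ℤ)) * (1 + ∑ k ∈ Icc 1 N,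
          (1 + (α / (1 - α)) * (1 - ρ k))⁻¹ * (N.choose k : ℝ) * Q k w)
      = (2 : ℝ) ^ (-(N : ℤ)) *
          ∑ k ∈ range (N + 1), (∫ ω, Y ω ^ k ∂μ) * (N.choose k : ℝ) * Q k w := by
        rw [range_eq_Ico, sum_eq_sum_Ico_succ_bot N.succ_pos, zero_add, Nat.succ_eq_add_one,
          Ico_add_one_right_eq_Icc]
        simp [hmoment, krawtchouk_zero_eq_one (hQ w hw)]
    _ = ∫ ω, (2 : ℝ) ^ (-(N : ℤ)) *
          ∑ k ∈ range (N + 1), (N.choose k : ℝ) * Q k w * Y ω ^ k ∂μ := by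
        rw [integral_const_mul, integral_finsetSum _ fun k _ => (hYint k).const_mul _]
        simp_rw [integral_const_mul]
        congr 1
        exact sum_congr rfl fun k _ => by ring
    _ = _ := integral_congr_ae
        (.of_forall fun ω => two_zpow_neg_mul_krawtchouk_sum hw (hQ w hw) (Y ω))

/-- for the de Finetti random walk (increment mixing measure `ν` on `[0,1]`,
spin law `μ_ξ = law of 1-2ω`), with `Y = ∏_{j=1}^{T_α} ξ_j`, the killed Green function
satisfies `(1-α)G(x,y;α) = E[((1-Y)/2)^{‖y-x‖}((1+Y)/2)^{N-‖y-x‖}]`; equivalently,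
`X_{T_α} - x mod 2` is a de Finetti sequence with mixing measure the law of
`V = (1-Y)/2`. -/
theorem deFinetti_green_function_Y
    (N : ℕ) (hN : 0 < N) (α : ℝ) (hα : α ∈ Set.Ioo (0 : ℝ) 1)
    (ν : Measure ℝ) [IsProbabilityMeasure ν]
    (hν : ν (Set.Icc (0 : ℝ) 1)ᶜ = 0)
    {Ω : Type*} [MeasurableSpace Ω] (μ : Measure Ω) [IsProbabilityMeasure μ]
    (ξ : ℕ → Ω → ℝ) (T : Ω → ℕ)
    (hξmeas : ∀ j, Measurable (ξ j))
    (hξlaw : ∀ j, Measure.map (ξ j) μ = Measure.map (fun w : ℝ => 1 - 2 * w) ν)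
    (hξindep : iIndepFun ξ μ)
    (hTmeas : Measurable T)
    (hTgeom : ∀ t : ℕ, μ {ω | T ω = t} = ENNReal.ofReal ((1 - α) * α ^ t))
    (hTindep : IndepFun T (fun ω => fun j => ξ j ω) μ)
    (Y : Ω → ℝ)
    (hY : ∀ ω, Y ω = ∏ j ∈ Finset.range (T ω), ξ j ω)
    (ρ : ℕ → ℝ) (hρ : ∀ k, ρ k = ∫ w, (1 - 2 * w) ^ k ∂ν)
    (Q : ℕ → ℕ → ℝ)
    (hQ : ∀ w : ℕ, w ≤ N → ∀ φ : ℝ,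
      ∑ k ∈ Finset.range (N + 1), (N.choose k : ℝ) * Q k w * φ ^ k
        = (1 - φ) ^ w * (1 + φ) ^ (N - w)) :
    ∀ x y : Fin N → ZMod 2,
      (2 : ℝ) ^ (-(N : ℤ)) *
        (1 + ∑ k ∈ Finset.Icc 1 N,
          (1 + (α / (1 - α)) * (1 - ρ k))⁻¹ * (N.choose k : ℝ) *
            Q k (∑ j, ((y - x) j).val))
      = ∫ ω, ((1 - Y ω) / 2) ^ (∑ j, ((y - x) j).val) *
          ((1 + Y ω) / 2) ^ (N - ∑ j, ((y - x) j).val) ∂μ :=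
  deFinetti_green_function_Y_general N α hα ν hν μ ξ T hξmeas hξlaw hξindep hTmeas hTgeom hTindep Y
    hY ρ hρ Q hQ
end

section
/- Let (ξ_j)_{j≥1} be i.i.d. with law μ on [-1,1] having no atom at 0, ξ_0 with law μ_0, and T geometric with P(T=t)=(1-α)α^t independent of all ξ's. Then the probability that ∏_{j=0}^{T} ξ_j > 0 equals (1/2)(1 + (1 + (2α/(1-α)) μ([-1,0]))^{-1} (1 − 2μ_0([-1,0]))). -/
open Finset MeasureTheory ProbabilityTheory

/-! For a real random variable `X` with no atom at `0`, `P(X > 0) = (1 + E[sign X]) / 2`. Since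
`sign` is multiplicative, independence factors the bias of `∏_{j ≤ t} ξ_j` as
`(1 - 2 μ₀([-1,0])) (1 - 2 μ([-1,0]))^t`. Averaging over the independent geometric time `T` is
then a geometric series: `∑ (1 - α) α^t r^t = (1 - α) / (1 - α r)` with `r = 1 - 2 μ([-1,0])`,
and `(1 - α) / (1 - α r) = (1 + 2α/(1-α) μ([-1,0]))⁻¹`. -/

namespace Real

theorem measurable_sign : Measurable Real.sign :=
  Measurable.ite measurableSet_Iio measurable_const
    (Measurable.ite measurableSet_Ioi measurable_const measurable_const)

theorem sign_mul (x y : ℝ) : sign (x * y) = sign x * sign y := by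
  rcases lt_trichotomy x 0 with hx | hx | hx <;> rcases lt_trichotomy y 0 with hy | hy | hy <;>
    simp [sign_of_neg, sign_of_pos, hx, hy, mul_pos_of_neg_of_neg, mul_neg_of_neg_of_pos,
      mul_neg_of_pos_of_neg]

end Real

namespace ProbabilityTheory

variable {Ω : Type*} [MeasurableSpace Ω] {μ : Measure Ω}

theorem ae_ne_of_map_apply_singleton_eq_zero {β : Type*} [MeasurableSpace β]
    [MeasurableSingletonClass β] {X : Ω → β} (hX : Measurable X) {x : β}
    (h : μ.map X {x} = 0) : ∀ᵐ ω ∂μ, X ω ≠ x :=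
  ae_of_ae_map hX.aemeasurable (p := (· ≠ x)) (by rw [ae_iff]; simpa using h)

theorem IndepFun.measure_setOf_eq_tsum {β : Type*} [MeasurableSpace β] {T : Ω → ℕ}
    {Y : Ω → β} (hT : Measurable T) (hY : Measurable Y) (hTY : IndepFun T Y μ)
    {P : ℕ → β → Prop} (hP : ∀ t, MeasurableSet {x | P t x}) :
    μ {ω | P (T ω) (Y ω)} = ∑' t, μ {ω | T ω = t} * μ {ω | P t (Y ω)} := by
  have hdecomp : {ω | P (T ω) (Y ω)} = ⋃ t, T ⁻¹' {t} ∩ Y ⁻¹' {x | P t x} := by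
    ext ω; simp
  have hdisj : Pairwise (Function.onFun Disjoint fun t => T ⁻¹' {t} ∩ Y ⁻¹' {x | P t x}) :=
    fun s t hst => Set.disjoint_left.2 fun ω hs ht => hst (hs.1.symm.trans ht.1)
  rw [hdecomp, measure_iUnion hdisj fun t => (hT (measurableSet_singleton t)).inter (hY (hP t))]
  exact tsum_congr fun t =>
    hTY.measure_inter_preimage_eq_mul _ _ (measurableSet_singleton t) (hP t)

variable [IsProbabilityMeasure μ]

theorem integral_sign_eq_two_mul_measureReal_pos_sub_one {X : Ω → ℝ} (hX : Measurable X)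
    (hX0 : ∀ᵐ ω ∂μ, X ω ≠ 0) :
    ∫ ω, Real.sign (X ω) ∂μ = 2 * μ.real {ω | 0 < X ω} - 1 := by
  have hpos : MeasurableSet {ω | 0 < X ω} := measurableSet_lt measurable_const hX
  have hsign : (fun ω => Real.sign (X ω)) =ᵐ[μ]
      fun ω => 2 * {ω | 0 < X ω}.indicator 1 ω - 1 := by
    filter_upwards [hX0] with ω h
    rcases h.lt_or_gt with h | h
    · simp [Real.sign_of_neg h, h.not_gt]
    · simp [Real.sign_of_pos h, h]; norm_num
  rw [integral_congr_ae hsign, integral_sub (((integrable_const 1).indicator hpos).const_mul 2)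
    (integrable_const 1), integral_const_mul, integral_indicator_one hpos]
  simp

theorem integral_sign_comp_eq_one_sub_two_mul {X : Ω → ℝ} (hX : Measurable X) {ν : Measure ℝ}
    (hXν : μ.map X = ν) (hν0 : ν {0} = 0) :
    ∫ ω, Real.sign (X ω) ∂μ = 1 - 2 * ν.real (Set.Iic 0) := by
  have hX0 := ae_ne_of_map_apply_singleton_eq_zero hX (hXν ▸ hν0)
  have hpos : μ.real {ω | 0 < X ω} = 1 - ν.real (Set.Iic 0) := by
    rw [← hXν, map_measureReal_apply hX measurableSet_Iic, ← probReal_compl_eq_one_sub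
      (hX measurableSet_Iic)]
    congr 1; ext ω; simp
  rw [integral_sign_eq_two_mul_measureReal_pos_sub_one hX hX0, hpos]
  ring

theorem iIndepFun.integral_sign_prod_range {ξ : ℕ → Ω → ℝ} (hξ : iIndepFun ξ μ)
    (hξm : ∀ j, Measurable (ξ j)) (n : ℕ) :
    ∫ ω, Real.sign (∏ j ∈ range n, ξ j ω) ∂μ = ∏ j ∈ range n, ∫ ω, Real.sign (ξ j ω) ∂μ := by
  induction n with
  | zero => simp
  | succ n ih =>
    have hind := (hξ.indepFun_prod_range_succ hξm n).comp Real.measurable_sign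
      Real.measurable_sign
    have hm : ∀ f : Ω → ℝ, Measurable f → AEStronglyMeasurable (Real.sign ∘ f) μ :=
      fun f hf => (Real.measurable_sign.comp hf).aestronglyMeasurable
    simp only [prod_range_succ, Real.sign_mul, ← ih]
    simpa [Finset.prod_apply] using hind.integral_fun_mul_eq_mul_integral
      (hm _ (by fun_prop)) (hm _ (hξm n))

theorem iIndepFun.measureReal_prod_range_succ_pos {ξ : ℕ → Ω → ℝ} (hξ : iIndepFun ξ μ)
    (hξm : ∀ j, Measurable (ξ j)) (hne : ∀ j, ∀ᵐ ω ∂μ, ξ j ω ≠ 0) {b₀ b : ℝ}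
    (hb₀ : ∫ ω, Real.sign (ξ 0 ω) ∂μ = b₀) (hb : ∀ j, ∫ ω, Real.sign (ξ (j + 1) ω) ∂μ = b)
    (t : ℕ) : μ.real {ω | 0 < ∏ j ∈ range (t + 1), ξ j ω} = (1 + b₀ * b ^ t) / 2 := by
  have h := integral_sign_eq_two_mul_measureReal_pos_sub_one (μ := μ)
    (Finset.measurable_prod (range (t + 1)) fun j _ => hξm j)
    ((ae_all_iff.2 hne).mono fun ω h => prod_ne_zero_iff.2 fun j _ => h j)
  rw [hξ.integral_sign_prod_range hξm, prod_range_succ', hb₀] at h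
  simp only [hb, prod_const, card_range] at h
  linarith

end ProbabilityTheory

theorem measure_Icc_eq_measure_Iic_of_compl_null {ν : Measure ℝ} {a b c : ℝ}
    (hν : ν (Set.Icc a b)ᶜ = 0) (hc : c ≤ b) : ν (Set.Icc a c) = ν (Set.Iic c) := by
  rw [← measure_inter_conull (s := Set.Iic c) hν]
  congr 1
  ext x
  simp only [Set.mem_Icc, Set.mem_inter_iff, Set.mem_Iic]
  exact ⟨fun ⟨hax, hxc⟩ => ⟨hxc, hax, hxc.trans hc⟩, fun ⟨hxc, hax, _⟩ => ⟨hax, hxc⟩⟩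

theorem tsum_geometric_mul_half_one_add_mul_pow {α p c : ℝ} (hα0 : 0 ≤ α) (hα1 : α < 1)
    (hp0 : 0 ≤ p) (hp1 : p ≤ 1) :
    ∑' t : ℕ, (1 - α) * α ^ t * ((1 + c * (1 - 2 * p) ^ t) / 2)
      = 1 / 2 * (1 + (1 + 2 * α / (1 - α) * p)⁻¹ * c) := by
  have hr : |α * (1 - 2 * p)| < 1 := by
    rw [abs_mul, abs_of_nonneg hα0]
    calc α * |1 - 2 * p| ≤ α * 1 :=
          mul_le_mul_of_nonneg_left (abs_le.2 ⟨by linarith, by linarith⟩) hα0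
      _ < 1 := by linarith
  have hsplit : ∀ t : ℕ, (1 - α) * α ^ t * ((1 + c * (1 - 2 * p) ^ t) / 2)
      = (1 - α) / 2 * α ^ t + (1 - α) * c / 2 * (α * (1 - 2 * p)) ^ t := fun t => by
    rw [mul_pow]; ring
  rw [tsum_congr hsplit, Summable.tsum_add
    ((summable_geometric_of_lt_one hα0 hα1).mul_left _)
    ((summable_geometric_of_abs_lt_one hr).mul_left _), tsum_mul_left, tsum_mul_left,
    tsum_geometric_of_lt_one hα0 hα1, tsum_geometric_of_abs_lt_one hr]
  have h1α : 1 - α ≠ 0 := by linarith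
  have hden : 1 - α * (1 - 2 * p) ≠ 0 := by nlinarith
  have hfactor : 1 + 2 * α / (1 - α) * p = (1 - α * (1 - 2 * p)) / (1 - α) := by
    field_simp; ring
  rw [hfactor, inv_div]
  field_simp

theorem geometric_product_sign_probability_general
    (α : ℝ) (hα : α ∈ Set.Ioo (0 : ℝ) 1)
    {Ω : Type*} [MeasurableSpace Ω] (μ : Measure Ω) [IsProbabilityMeasure μ]
    (m m₀ : Measure ℝ) [IsProbabilityMeasure m]
    (hm : m (Set.Icc (-1 : ℝ) 1)ᶜ = 0) (hm₀ : m₀ (Set.Icc (-1 : ℝ) 1)ᶜ = 0)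
    (hm0 : m {(0 : ℝ)} = 0) (hm₀0 : m₀ {(0 : ℝ)} = 0)
    (ξ : ℕ → Ω → ℝ) (T : Ω → ℕ)
    (hξmeas : ∀ j, Measurable (ξ j))
    (hξ0law : Measure.map (ξ 0) μ = m₀)
    (hξlaw : ∀ j : ℕ, 1 ≤ j → Measure.map (ξ j) μ = m)
    (hξindep : iIndepFun ξ μ)
    (hTmeas : Measurable T)
    (hTgeom : ∀ t : ℕ, μ {ω | T ω = t} = ENNReal.ofReal ((1 - α) * α ^ t))
    (hTindep : IndepFun T (fun ω => fun j => ξ j ω) μ) :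
    (μ {ω | 0 < ∏ j ∈ Finset.range (T ω + 1), ξ j ω}).toReal
      = (1 / 2) * (1 +
          (1 + (2 * α / (1 - α)) * (m (Set.Icc (-1 : ℝ) 0)).toReal)⁻¹ *
            (1 - 2 * (m₀ (Set.Icc (-1 : ℝ) 0)).toReal)) := by
  obtain ⟨hα0, hα1⟩ := hα
  set p := (m (Set.Icc (-1 : ℝ) 0)).toReal
  set p₀ := (m₀ (Set.Icc (-1 : ℝ) 0)).toReal
  have hbias₀ : ∫ ω, Real.sign (ξ 0 ω) ∂μ = 1 - 2 * p₀ := by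
    rw [integral_sign_comp_eq_one_sub_two_mul (hξmeas 0) hξ0law hm₀0,
      measureReal_def, ← measure_Icc_eq_measure_Iic_of_compl_null hm₀ zero_le_one]
  have hbias : ∀ j, ∫ ω, Real.sign (ξ (j + 1) ω) ∂μ = 1 - 2 * p := fun j => by
    rw [integral_sign_comp_eq_one_sub_two_mul (hξmeas _) (hξlaw _ j.succ_pos) hm0,
      measureReal_def, ← measure_Icc_eq_measure_Iic_of_compl_null hm zero_le_one]
  have hne : ∀ j, ∀ᵐ ω ∂μ, ξ j ω ≠ 0 := by
    rintro (_ | j) <;> refine ae_ne_of_map_apply_singleton_eq_zero (hξmeas _) ?_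
    · rwa [hξ0law]
    · rwa [hξlaw _ j.succ_pos]
  rw [hTindep.measure_setOf_eq_tsum hTmeas (measurable_pi_lambda _ hξmeas)
      (P := fun t x => 0 < ∏ j ∈ range (t + 1), x j) fun t =>
        measurableSet_lt measurable_const (by fun_prop),
    ENNReal.tsum_toReal_eq fun t => ENNReal.mul_ne_top (measure_ne_top _ _) (measure_ne_top _ _)]
  simp only [ENNReal.toReal_mul, hTgeom, ← measureReal_def,
    hξindep.measureReal_prod_range_succ_pos hξmeas hne hbias₀ hbias,
    ENNReal.toReal_ofReal (mul_nonneg (sub_nonneg.2 hα1.le) (pow_nonneg hα0.le _))]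
  exact tsum_geometric_mul_half_one_add_mul_pow hα0.le hα1 ENNReal.toReal_nonneg measureReal_le_one

/-- with `(ξ_j)_{j≥1}` i.i.d. with law `m` on `[-1,1]` (no atom at 0),
`ξ_0` with law `m₀` (no atom at 0), all independent, and `T` geometric
(`P(T=t)=(1-α)α^t`) independent of the `ξ`'s, the probability that `∏_{j=0}^T ξ_j > 0`
equals `(1/2)(1 + (1 + (2α/(1-α)) m([-1,0]))⁻¹ (1 - 2 m₀([-1,0])))`. -/
theorem geometric_product_sign_probability
    (α : ℝ) (hα : α ∈ Set.Ioo (0 : ℝ) 1)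
    {Ω : Type*} [MeasurableSpace Ω] (μ : Measure Ω) [IsProbabilityMeasure μ]
    (m m₀ : Measure ℝ) [IsProbabilityMeasure m] [IsProbabilityMeasure m₀]
    (hm : m (Set.Icc (-1 : ℝ) 1)ᶜ = 0) (hm₀ : m₀ (Set.Icc (-1 : ℝ) 1)ᶜ = 0)
    (hm0 : m {(0 : ℝ)} = 0) (hm₀0 : m₀ {(0 : ℝ)} = 0)
    (ξ : ℕ → Ω → ℝ) (T : Ω → ℕ)
    (hξmeas : ∀ j, Measurable (ξ j))
    (hξ0law : Measure.map (ξ 0) μ = m₀)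
    (hξlaw : ∀ j : ℕ, 1 ≤ j → Measure.map (ξ j) μ = m)
    (hξindep : iIndepFun ξ μ)
    (hTmeas : Measurable T)
    (hTgeom : ∀ t : ℕ, μ {ω | T ω = t} = ENNReal.ofReal ((1 - α) * α ^ t))
    (hTindep : IndepFun T (fun ω => fun j => ξ j ω) μ) :
    (μ {ω | 0 < ∏ j ∈ Finset.range (T ω + 1), ξ j ω}).toReal
      = (1 / 2) * (1 +
          (1 + (2 * α / (1 - α)) * (m (Set.Icc (-1 : ℝ) 0)).toReal)⁻¹ *
            (1 - 2 * (m₀ (Set.Icc (-1 : ℝ) 0)).toReal)) :=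
  geometric_product_sign_probability_general α hα μ m m₀ hm hm₀ hm0 hm₀0 ξ T hξmeas hξ0law hξlaw
    hξindep hTmeas hTgeom hTindep
end
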